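/- arXiv:2302.06537 — 4 statements merged into one kernel-verified Lean document; each statement's English description precedes it below -/
import Mathlib

section
/- For any graph G on n vertices, the minimum number of clique flips t(G) needed to realize G is at least minrank₂(G); combined with the upper bound, minrank₂(G) ≤ t(G) ≤ minrank₂(G) + 1. -/
/-!
Indicator vectors turn clique flips into symmetric rank-one matrices `f fᵀ`, so `M` is realized
by `m` cliques iff some `F Fᵀ`, with `F` having `m` columns, agrees with `M` off the diagonal.
Since `rank (F Fᵀ) ≤ m` and the diagonal is free in `minrank₂`, this gives `minrank₂ ≤ t`.

Conversely, let `A = D + M` have rank `minrank₂`. Over GF(2), `xᵀAx = diag A ⬝ x` for symmetric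
`A`, so if `diag A ≠ 0` some `x` has `xᵀAx = 1`, and for `c = Ax` the symmetric matrix `A - c cᵀ`
has smaller rank (a Gaussian pivot). Its diagonal is `diag A - c`, and `x` can be chosen with
`c ≠ diag A` unless `A = c cᵀ`, so induction writes `A` as a sum of `rank A` squares. If `A ≠ 0`
has zero diagonal, subtracting `c cᵀ` for a nonzero column `c` of `A` makes the diagonal nonzero
without raising the rank, which costs the one extra square.
-/

/-- Adjacency matrix over GF(2) of the complete graph on the vertex subset `S`. -/
def cliqueAdj (n : ℕ) (S : Finset (Fin n)) : Matrix (Fin n) (Fin n) (ZMod 2) :=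
  Matrix.of fun i j => if i ≠ j ∧ i ∈ S ∧ j ∈ S then 1 else 0

/-- `M` is realized (off the diagonal) by the XOR of `m` clique adjacency matrices. -/
def realizes (n m : ℕ) (M : Matrix (Fin n) (Fin n) (ZMod 2)) : Prop :=
  ∃ S : Fin m → Finset (Fin n),
    ∀ i j : Fin n, i ≠ j → M i j = ∑ t : Fin m, cliqueAdj n (S t) i j

/-- `t(G)`: minimum number of clique flips realizing `M`. -/
noncomputable def tG (n : ℕ) (M : Matrix (Fin n) (Fin n) (ZMod 2)) : ℕ :=
  sInf {m | realizes n m M}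

/-- `minrank₂(G) = min { rank(D + G) : D diagonal }` over GF(2). -/
noncomputable def minrank2 (n : ℕ) (M : Matrix (Fin n) (Fin n) (ZMod 2)) : ℕ :=
  sInf {r | ∃ D : Matrix (Fin n) (Fin n) (ZMod 2), D.IsDiag ∧ (D + M).rank = r}

namespace Matrix

section SumOfSquares

variable {ι R : Type*} [CommSemiring R]

def IsSumOfSquares (m : ℕ) (A : Matrix ι ι R) : Prop :=
  ∃ F : Matrix ι (Fin m) R, A = F * Fᵀ

theorem isSumOfSquares_zero : IsSumOfSquares 0 (0 : Matrix ι ι R) :=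
  ⟨0, by simp⟩

theorem IsSumOfSquares.vecMulVec_add {m : ℕ} {A : Matrix ι ι R} (hA : IsSumOfSquares m A)
    (c : ι → R) : IsSumOfSquares (m + 1) (vecMulVec c c + A) := by
  obtain ⟨F, rfl⟩ := hA
  refine ⟨of fun i => Fin.cons (c i) (F i), ?_⟩
  ext i j
  simp [mul_apply, Fin.sum_univ_succ, vecMulVec_apply]

theorem rank_mul_transpose_le [StrongRankCondition R] [Fintype ι] {m : ℕ}
    (F : Matrix ι (Fin m) R) : (F * Fᵀ).rank ≤ m :=
  (rank_mul_le_left F Fᵀ).trans ((rank_le_card_width F).trans_eq (Fintype.card_fin m))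

theorem isSymm_vecMulVec_self (c : ι → R) : (vecMulVec c c).IsSymm :=
  transpose_vecMulVec c c

end SumOfSquares

section Pivot

variable {ι K : Type*} [Fintype ι] [DecidableEq ι] [Field K]

theorem range_mulVecLin_sub_vecMulVec_mulVec_le (A : Matrix ι ι K) (s c : ι → K) :
    LinearMap.range (A - vecMulVec (A *ᵥ s) c).mulVecLin ≤ LinearMap.range A.mulVecLin := by
  rw [show A - vecMulVec (A *ᵥ s) c = A * (1 - vecMulVec s c) by
    rw [mul_sub, mul_one, mul_vecMulVec], mulVecLin_mul]
  exact LinearMap.range_comp_le_range (1 - vecMulVec s c).mulVecLin A.mulVecLin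

theorem rank_sub_vecMulVec_mulVec_le (A : Matrix ι ι K) (s c : ι → K) :
    (A - vecMulVec (A *ᵥ s) c).rank ≤ A.rank :=
  Submodule.finrank_mono (range_mulVecLin_sub_vecMulVec_mulVec_le A s c)

theorem rank_sub_vecMulVec_mulVec_lt {A : Matrix ι ι K} (hA : A.IsSymm) {x : ι → K}
    (hx : x ⬝ᵥ A *ᵥ x = 1) : (A - vecMulVec (A *ᵥ x) (A *ᵥ x)).rank < A.rank := by
  set c := A *ᵥ x
  set B := A - vecMulVec c c
  have hcx : c ⬝ᵥ x = 1 := by rwa [dotProduct_comm]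
  have hBx : B *ᵥ x = 0 := by
    rw [sub_mulVec, vecMulVec_mulVec, hcx, MulOpposite.op_one, one_smul, sub_self]
  have hBsymm : B.IsSymm := hA.sub (isSymm_vecMulVec_self c)
  have hc : c ∉ LinearMap.range B.mulVecLin := by
    rintro ⟨y, hy⟩
    have : x ⬝ᵥ c = 0 := by
      rw [← hy, mulVecLin_apply, dotProduct_mulVec, ← mulVec_transpose, hBsymm.eq, hBx,
        zero_dotProduct]
    rw [dotProduct_comm, hcx] at this
    exact one_ne_zero this
  refine Submodule.finrank_lt_finrank_of_lt
    (lt_of_le_of_ne (range_mulVecLin_sub_vecMulVec_mulVec_le A x c) fun h => hc ?_)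
  rw [h]
  exact ⟨x, rfl⟩

end Pivot

end Matrix

theorem ZMod.mul_self_mod_two (a : ZMod 2) : a * a = a := by
  rw [← sq, ZMod.pow_card]

theorem ZMod.eq_one_of_ne_zero_mod_two : ∀ {a : ZMod 2}, a ≠ 0 → a = 1 := by
  decide

namespace Matrix

section ZModTwo

variable {ι : Type*}

theorem diag_sub_vecMulVec_self (A : Matrix ι ι (ZMod 2)) (c : ι → ZMod 2) :
    (A - vecMulVec c c).diag = A.diag - c :=
  funext fun i => congrArg (A i i - ·) (ZMod.mul_self_mod_two (c i))

variable [Fintype ι] [DecidableEq ι]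

theorem dotProduct_mulVec_self_eq_diag_dotProduct {A : Matrix ι ι (ZMod 2)} (hA : A.IsSymm)
    (x : ι → ZMod 2) : x ⬝ᵥ A *ᵥ x = A.diag ⬝ᵥ x := by
  -- Over `ZMod 2` the quadratic form of a symmetric matrix is additive, as `2 * (x ⬝ᵥ A *ᵥ y) = 0`.
  let Q : (ι → ZMod 2) →+ ZMod 2 := AddMonoidHom.mk' (fun x => x ⬝ᵥ A *ᵥ x) fun x y => by
    have hxy : y ⬝ᵥ A *ᵥ x = x ⬝ᵥ A *ᵥ y := by
      rw [dotProduct_comm, dotProduct_mulVec, ← mulVec_transpose, hA.eq]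
    simp only [mulVec_add, add_dotProduct, dotProduct_add, hxy]
    linear_combination CharTwo.add_self_eq_zero (x ⬝ᵥ A *ᵥ y)
  let L : (ι → ZMod 2) →+ ZMod 2 := AddMonoidHom.mk' (A.diag ⬝ᵥ ·) (dotProduct_add A.diag)
  refine DFunLike.congr_fun (AddMonoidHom.functions_ext _ Q L fun i a => ?_) x
  simp only [Q, L, AddMonoidHom.mk'_apply, single_dotProduct, dotProduct_single, mulVec_single,
    Pi.smul_apply, col_apply, MulOpposite.smul_eq_mul_unop, MulOpposite.unop_op, diag_apply]
  linear_combination A i i * ZMod.mul_self_mod_two a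

theorem exists_pivot_of_diag_ne_zero {A : Matrix ι ι (ZMod 2)} (hA : A.diag ≠ 0) :
    ∃ x, A.diag ⬝ᵥ x = 1 ∧ (A *ᵥ x = A.diag → A = vecMulVec A.diag A.diag) := by
  by_cases h : ∃ x, A.diag ⬝ᵥ x = 1 ∧ A *ᵥ x ≠ A.diag
  · obtain ⟨x, hx, hne⟩ := h
    exact ⟨x, hx, fun h => absurd h hne⟩
  push Not at h
  obtain ⟨i, hi⟩ : ∃ i, A.diag i = 1 := by
    obtain ⟨i, hi⟩ := Function.ne_iff.mp hA
    exact ⟨i, ZMod.eq_one_of_ne_zero_mod_two hi⟩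
  have hsingle : A.diag ⬝ᵥ Pi.single i 1 = 1 := by rw [dotProduct_single, mul_one, hi]
  refine ⟨Pi.single i 1, hsingle, fun _ => ext_iff_mulVec.2 fun x => ?_⟩
  rw [vecMulVec_mulVec, op_smul_eq_smul]
  by_cases hx0 : A.diag ⬝ᵥ x = 0
  · have := h (x + Pi.single i 1) (by rw [dotProduct_add, hx0, hsingle, zero_add])
    rw [mulVec_add, h _ hsingle, add_eq_right] at this
    rw [this, hx0, zero_smul]
  · have hx := ZMod.eq_one_of_ne_zero_mod_two hx0
    rw [hx, one_smul, h x hx]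

theorem exists_isSumOfSquares_le_rank {A : Matrix ι ι (ZMod 2)} (hA : A.IsSymm)
    (hdiag : A.diag = 0 → A = 0) : ∃ m ≤ A.rank, IsSumOfSquares m A := by
  induction hr : A.rank using Nat.strong_induction_on generalizing A with
  | _ r ih =>
  by_cases hd : A.diag = 0
  · exact ⟨0, Nat.zero_le _, hdiag hd ▸ isSumOfSquares_zero⟩
  obtain ⟨x, hx, hxA⟩ := exists_pivot_of_diag_ne_zero hd
  set c := A *ᵥ x
  have hBdiag : (A - vecMulVec c c).diag = 0 → A - vecMulVec c c = 0 := fun h => by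
    rw [diag_sub_vecMulVec_self, sub_eq_zero] at h
    rw [hxA h.symm, h, sub_self]
  have hlt : (A - vecMulVec c c).rank < r := hr ▸ rank_sub_vecMulVec_mulVec_lt hA (x := x)
    (by rwa [dotProduct_mulVec_self_eq_diag_dotProduct hA])
  obtain ⟨m, hm, hB⟩ := ih _ hlt (hA.sub (isSymm_vecMulVec_self c)) hBdiag rfl
  exact ⟨m + 1, by omega, by simpa using hB.vecMulVec_add c⟩

theorem exists_isSumOfSquares_le_rank_succ {A : Matrix ι ι (ZMod 2)} (hA : A.IsSymm) :
    ∃ m ≤ A.rank + 1, IsSumOfSquares m A := by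
  by_cases hdiag : A.diag = 0 → A = 0
  · obtain ⟨m, hm, hsq⟩ := exists_isSumOfSquares_le_rank hA hdiag
    exact ⟨m, hm.trans A.rank.le_succ, hsq⟩
  push Not at hdiag
  obtain ⟨hd, hA0⟩ := hdiag
  obtain ⟨s, hs⟩ : ∃ s, A *ᵥ s ≠ 0 := by
    by_contra! h
    exact hA0 (ext_iff_mulVec.2 fun v => by simp [h v])
  set c := A *ᵥ s
  have hBdiag : (A - vecMulVec c c).diag = 0 → A - vecMulVec c c = 0 := fun h => by
    rw [diag_sub_vecMulVec_self, hd, zero_sub, neg_eq_zero] at h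
    exact absurd h hs
  obtain ⟨m, hm, hB⟩ :=
    exists_isSumOfSquares_le_rank (hA.sub (isSymm_vecMulVec_self c)) hBdiag
  have hle : (A - vecMulVec c c).rank ≤ A.rank := rank_sub_vecMulVec_mulVec_le A s c
  exact ⟨m + 1, by omega, by simpa using hB.vecMulVec_add c⟩

end ZModTwo

end Matrix

open Matrix

theorem cliqueAdj_apply_of_ne {n : ℕ} (S : Finset (Fin n)) {i j : Fin n} (hij : i ≠ j) :
    cliqueAdj n S i j = (if i ∈ S then 1 else 0) * (if j ∈ S then 1 else 0) := by
  by_cases hi : i ∈ S <;> by_cases hj : j ∈ S <;> simp [cliqueAdj, hi, hj, hij]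

theorem realizes_iff_exists_offDiag_eq (n m : ℕ) (M : Matrix (Fin n) (Fin n) (ZMod 2)) :
    realizes n m M ↔
      ∃ F : Matrix (Fin n) (Fin m) (ZMod 2), ∀ i j, i ≠ j → M i j = (F * Fᵀ) i j := by
  simp only [realizes, mul_apply, transpose_apply]
  constructor
  · rintro ⟨S, hS⟩
    refine ⟨of fun i t => if i ∈ S t then 1 else 0, fun i j hij => ?_⟩
    simp only [hS i j hij, cliqueAdj_apply_of_ne _ hij, of_apply]
  · rintro ⟨F, hF⟩
    refine ⟨fun t => {i | F i t = 1}, fun i j hij => ?_⟩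
    have hind : ∀ a : ZMod 2, (if a = 1 then 1 else 0) = a := by decide
    simp only [hF i j hij, cliqueAdj_apply_of_ne _ hij, Finset.mem_filter, Finset.mem_univ,
      true_and, hind]

theorem exists_isDiag_rank_add_eq_minrank2 (n : ℕ) (M : Matrix (Fin n) (Fin n) (ZMod 2)) :
    ∃ D : Matrix (Fin n) (Fin n) (ZMod 2), D.IsDiag ∧ (D + M).rank = minrank2 n M :=
  Nat.sInf_mem (s := {r | ∃ D : Matrix (Fin n) (Fin n) (ZMod 2), D.IsDiag ∧ (D + M).rank = r})
    ⟨_, 0, isDiag_zero, rfl⟩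

theorem minrank_le_t_le_minrank_succ_general (n : ℕ) (M : Matrix (Fin n) (Fin n) (ZMod 2))
    (hsymm : M.IsSymm) :
    minrank2 n M ≤ tG n M ∧ tG n M ≤ minrank2 n M + 1 := by
  obtain ⟨D, hD, hrank⟩ := exists_isDiag_rank_add_eq_minrank2 n M
  obtain ⟨m, hm, F, hF⟩ := exists_isSumOfSquares_le_rank_succ (hD.isSymm.add hsymm)
  have hreal : realizes n m M := (realizes_iff_exists_offDiag_eq n m M).2
    ⟨F, fun i j hij => by rw [← hF, Matrix.add_apply, hD hij, zero_add]⟩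
  refine ⟨?_, (Nat.sInf_le hreal).trans (hrank ▸ hm)⟩
  obtain ⟨G, hG⟩ := (realizes_iff_exists_offDiag_eq n _ M).1
    (Nat.sInf_mem (s := {k | realizes n k M}) ⟨m, hreal⟩)
  have hdiag : (G * Gᵀ - M).IsDiag := fun i j hij => sub_eq_zero.2 (hG i j hij).symm
  calc minrank2 n M ≤ (G * Gᵀ - M + M).rank := Nat.sInf_le ⟨_, hdiag, rfl⟩
    _ = (G * Gᵀ).rank := by rw [sub_add_cancel]
    _ ≤ tG n M := rank_mul_transpose_le G

/-- `minrank₂(G) ≤ t(G) ≤ minrank₂(G) + 1`. -/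
theorem minrank_le_t_le_minrank_succ (n : ℕ) (M : Matrix (Fin n) (Fin n) (ZMod 2))
    (hsymm : M.IsSymm) (hdiag : ∀ i, M i i = 0) :
    minrank2 n M ≤ tG n M ∧ tG n M ≤ minrank2 n M + 1 :=
  minrank_le_t_le_minrank_succ_general n M hsymm
end

section
/- For i = 1,…,n−1 let G_i be the clique produced at step i of the disentangling procedure (the clique on v_i and its neighbors in the residual graph S_i = (G₁ ⊕ ⋯ ⊕ G_{i−1}) ⊕ G). Then for all j < i, the vertex v_j is isolated in G_i; equivalently the clique S_i is contained in {v_i, v_{i+1}, …, v_n}. -/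
open scoped symmDiff

/-- Edge set of the complete graph on the vertex subset `S ⊆ Fin n`. -/
def cliqueEdges (n : ℕ) (S : Finset (Fin n)) : Finset (Sym2 (Fin n)) :=
  ((S ×ˢ S).filter fun p => p.1 ≠ p.2).image fun p => s(p.1, p.2)

/-- Neighborhood of `v` in the graph with edge set `G`. -/
def nbhd (n : ℕ) (G : Finset (Sym2 (Fin n))) (v : Fin n) : Finset (Fin n) :=
  Finset.univ.filter fun u => u ≠ v ∧ s(v, u) ∈ G

/-- One step of the disentangling procedure: flip the clique on `v` and its neighbors. -/
def step (n : ℕ) (G : Finset (Sym2 (Fin n))) (v : Fin n) : Finset (Sym2 (Fin n)) :=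
  G ∆ cliqueEdges n (insert v (nbhd n G v))

/-- Residual graph `S_{i+1}` after disentangling vertices `v₀, …, v_{i-1}` in order. -/
def residualGraph (n : ℕ) (G : Finset (Sym2 (Fin n))) : ℕ → Finset (Sym2 (Fin n))
  | 0 => G
  | i + 1 => if h : i < n then step n (residualGraph n G i) ⟨i, h⟩ else residualGraph n G i

lemma mem_cliqueEdges {n : ℕ} {S : Finset (Fin n)} {x y : Fin n} :
    s(x, y) ∈ cliqueEdges n S ↔ x ∈ S ∧ y ∈ S ∧ x ≠ y := by
  simp only [cliqueEdges, Finset.mem_image, Finset.mem_filter, Finset.mem_product, Prod.exists]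
  constructor
  · rintro ⟨a, b, ⟨⟨ha, hb⟩, hab⟩, heq⟩
    rw [Sym2.eq_iff] at heq
    rcases heq with ⟨rfl, rfl⟩ | ⟨rfl, rfl⟩
    · exact ⟨ha, hb, hab⟩
    · exact ⟨hb, ha, fun e => hab e.symm⟩
  · rintro ⟨hx, hy, hxy⟩; exact ⟨x, y, ⟨⟨hx, hy⟩, hxy⟩, rfl⟩

lemma residual_diagFree {n : ℕ} {G : Finset (Sym2 (Fin n))}
    (hG : ∀ e ∈ G, ¬ e.IsDiag) : ∀ i, ∀ e ∈ residualGraph n G i, ¬ e.IsDiag := by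
  intro i
  induction i with
  | zero => exact hG
  | succ i ih =>
    intro e he
    rw [residualGraph] at he
    split at he
    · rw [step, Finset.mem_symmDiff] at he
      rcases he with ⟨he, _⟩ | ⟨he, _⟩
      · exact ih e he
      · induction e using Sym2.inductionOn with
        | hf x y =>
          rw [mem_cliqueEdges] at he
          simpa using he.2.2
    · exact ih e he

lemma residual_isolated {n : ℕ} {G : Finset (Sym2 (Fin n))}
    (hG : ∀ e ∈ G, ¬ e.IsDiag) (i j : ℕ) (hj : j < n) (hji : j < i) :
    ∀ u : Fin n, s(⟨j, hj⟩, u) ∉ residualGraph n G i := by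
  induction i with
  | zero => omega
  | succ i ih =>
    intro u hu
    rw [residualGraph] at hu
    by_cases hin : i < n
    · rw [dif_pos hin, step, Finset.mem_symmDiff] at hu
      set v : Fin n := ⟨i, hin⟩
      set R := residualGraph n G i
      rcases Nat.lt_or_ge j i with hji' | hji'
      · -- j was already isolated in R
        have hiso := ih hji'
        have hjnot : (⟨j, hj⟩ : Fin n) ∉ insert v (nbhd n R v) := by
          simp only [Finset.mem_insert, nbhd, Finset.mem_filter, Finset.mem_univ, true_and]
          push_neg
          refine ⟨fun e => ?_, fun _ hmem => ?_⟩
          · have : j = i := congrArg Fin.val e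
            omega
          · exact hiso v (by rwa [Sym2.eq_swap])
        rcases hu with ⟨hu, _⟩ | ⟨hu, _⟩
        · exact hiso u hu
        · rw [mem_cliqueEdges] at hu
          exact hjnot hu.1
      · -- j = i : the step isolates v
        have hji'' : j = i := by omega
        have hvj : (⟨j, hj⟩ : Fin n) = v := by simp [v, hji'']
        rw [hvj] at hu
        by_cases huv : u = v
        · subst huv
          rcases hu with ⟨hu, _⟩ | ⟨hu, _⟩
          · exact residual_diagFree hG i _ hu (by simp)
          · rw [mem_cliqueEdges] at hu; exact hu.2.2 rfl
        · have hnb : s(v, u) ∈ R ↔ u ∈ nbhd n R v := by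
            simp [nbhd, huv]
          have hcl : s(v, u) ∈ cliqueEdges n (insert v (nbhd n R v)) ↔ u ∈ nbhd n R v := by
            rw [mem_cliqueEdges]
            constructor
            · rintro ⟨_, hu2, _⟩
              rcases Finset.mem_insert.mp hu2 with rfl | h2
              · exact absurd rfl huv
              · exact h2
            · intro h2
              exact ⟨Finset.mem_insert_self _ _, Finset.mem_insert_of_mem h2,
                fun e => huv e.symm⟩
          rw [hnb, hcl] at hu
          tauto
    · rw [dif_neg hin] at hu
      exact ih (by omega) u hu

/-- the clique `G_i` produced at step `i` (on `v_i` and its neighbors in the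
residualGraph graph `S_i`) is supported on `{v_i, v_{i+1}, …, v_{n-1}}`: every earlier vertex
is isolated in it. -/
theorem disentangle_clique_support (n : ℕ) (G : Finset (Sym2 (Fin n)))
    (hG : ∀ e ∈ G, ¬ e.IsDiag) (i : ℕ) (h : i < n) :
    ∀ u ∈ insert (⟨i, h⟩ : Fin n) (nbhd n (residualGraph n G i) ⟨i, h⟩), i ≤ (u : ℕ) := by
  intro u hu
  rcases Finset.mem_insert.mp hu with rfl | hu
  · exact le_refl i
  · simp only [nbhd, Finset.mem_filter, Finset.mem_univ, true_and] at hu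
    obtain ⟨hne, hmem⟩ := hu
    by_contra hlt
    push_neg at hlt
    have := residual_isolated hG i (u : ℕ) u.isLt hlt (⟨i, h⟩ : Fin n)
    rw [Fin.eta] at this
    rw [Sym2.eq_swap] at hmem
    exact this hmem
end

section
/- Every invertible n×n matrix over GF(2) can be diagonalized to the identity using at most 2n−1 operations, where each operation is either a single column addition c_i ← c_i + c_j, or a fan-out (adding a fixed column simultaneously to an arbitrary set of other columns); moreover the last operation requires no preceding single column addition. -/
/-!
Gaussian elimination by columns, one row at a time. Suppose the rows in a set `S` of an
invertible matrix `M` are already rows of the identity and `i ∉ S`. Row `i` has a nonzero entry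
in some column `c ∉ S`, since otherwise it would be a combination of the rows in `S`. If
`M i i = 0`, adding column `c` to column `i` makes it `1`; then the fan-out with control `i` onto
every other column with a `1` in row `i` turns row `i` into a row of the identity. Neither
operation touches the rows in `S`, as those vanish in the columns `c` and `i`. When `i` is the last
unreduced row, `c = i` is forced, so that round needs no column addition: `2n - 1` operations.
-/

/-- The column-operation matrix of a fan-out with control column `c` and target set `T`. -/
def fanoutMatrix (n : ℕ) (c : Fin n) (T : Finset (Fin n)) : Matrix (Fin n) (Fin n) (ZMod 2) :=
  1 + ∑ j ∈ T, Matrix.single c j 1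

/-- `E` is the column operation adding column `j` to column `i` (mod 2). -/
def IsColAdd (n : ℕ) (E : Matrix (Fin n) (Fin n) (ZMod 2)) : Prop :=
  ∃ i j : Fin n, i ≠ j ∧ E = 1 + Matrix.single j i 1

/-- `E` is a fan-out column operation. -/
def IsFanout (n : ℕ) (E : Matrix (Fin n) (Fin n) (ZMod 2)) : Prop :=
  ∃ (c : Fin n) (T : Finset (Fin n)), c ∉ T ∧ E = fanoutMatrix n c T

open Matrix

theorem Matrix.exists_ne_zero_of_isUnit_det {ι R : Type*} [Fintype ι] [DecidableEq ι]
    [CommRing R] [Nontrivial R] {M : Matrix ι ι R} (hM : IsUnit M.det) {S : Finset ι}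
    (hS : ∀ j ∈ S, M j = (1 : Matrix ι ι R) j) {i : ι} (hi : i ∉ S) :
    ∃ c ∉ S, M i c ≠ 0 := by
  by_contra! h
  let v : ι → R := Pi.single i 1 - ∑ j ∈ S, Pi.single j (M i j)
  have hv : v ᵥ* M = 0 := by
    ext b
    have hrow : ∀ j ∈ S, M i j * M j b = if j = b then M i b else 0 := fun j hj => by
      rw [hS j hj, one_apply]; split_ifs with hjb <;> simp [hjb]
    simp only [v, sub_vecMul, sum_vecMul, single_vecMul, Pi.sub_apply, Finset.sum_apply,
      Pi.smul_apply, row_apply, smul_eq_mul, one_mul, Pi.zero_apply]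
    rw [Finset.sum_congr rfl hrow, Finset.sum_ite_eq']
    by_cases hb : b ∈ S
    · simp [hb]
    · simp [hb, h b hb]
  have : v = 0 := vecMul_injective_of_isUnit ((isUnit_iff_isUnit_det M).2 hM) (by simpa using hv)
  simpa [v, Finset.sum_apply, Pi.single_apply, hi] using congrFun this i

section ColumnOperations

variable {n : ℕ}

theorem mul_fanoutMatrix_apply (M : Matrix (Fin n) (Fin n) (ZMod 2)) (c : Fin n)
    (T : Finset (Fin n)) (a b : Fin n) :
    (M * fanoutMatrix n c T) a b = M a b + if b ∈ T then M a c else 0 := by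
  rw [fanoutMatrix, Matrix.mul_add, Matrix.mul_one, Matrix.mul_sum, Matrix.add_apply,
    Matrix.sum_apply]
  congr 1
  have hterm : ∀ j ∈ T, (M * single c j (1 : ZMod 2)) a b = if j = b then M a c else 0 :=
    fun j _ => by
      by_cases hjb : j = b
      · simp [hjb]
      · rw [if_neg hjb]
        exact mul_single_apply_of_ne (hbj := Ne.symm hjb) ..
  rw [Finset.sum_congr rfl hterm, Finset.sum_ite_eq']

theorem fanoutMatrix_singleton (c i : Fin n) :
    fanoutMatrix n c {i} = 1 + single c i 1 := by
  rw [fanoutMatrix, Finset.sum_singleton]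

theorem fanoutMatrix_mul_self {c : Fin n} {T : Finset (Fin n)} (hc : c ∉ T) :
    fanoutMatrix n c T * fanoutMatrix n c T = 1 := by
  set N : Matrix (Fin n) (Fin n) (ZMod 2) := ∑ j ∈ T, single c j 1
  have hsq : N * N = 0 := by
    simp only [N, Finset.sum_mul, Finset.mul_sum]
    exact Finset.sum_eq_zero fun _ _ => Finset.sum_eq_zero fun k hk =>
      single_mul_single_of_ne (h := ne_of_mem_of_not_mem hk hc) ..
  have hdouble : N + N = 0 := by
    ext
    exact CharTwo.add_self_eq_zero _
  calc (1 + N) * (1 + N) = 1 + (N + N) + N * N := by noncomm_ring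
    _ = 1 := by rw [hdouble, hsq, add_zero, add_zero]

theorem IsFanout.isUnit {E : Matrix (Fin n) (Fin n) (ZMod 2)} (hE : IsFanout n E) :
    IsUnit E := by
  obtain ⟨c, T, hc, rfl⟩ := hE
  exact ⟨⟨_, _, fanoutMatrix_mul_self hc, fanoutMatrix_mul_self hc⟩, rfl⟩

theorem IsColAdd.isFanout {E : Matrix (Fin n) (Fin n) (ZMod 2)} (hE : IsColAdd n E) :
    IsFanout n E := by
  obtain ⟨i, j, hij, rfl⟩ := hE
  exact ⟨j, {i}, by simpa using hij.symm, (fanoutMatrix_singleton j i).symm⟩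

theorem isUnit_prod_of_isColAdd_or_isFanout {L : List (Matrix (Fin n) (Fin n) (ZMod 2))}
    (hL : ∀ E ∈ L, IsColAdd n E ∨ IsFanout n E) : IsUnit L.prod :=
  List.prod_isUnit fun E hE => ((hL E hE).elim IsColAdd.isFanout id).isUnit

section RowReduction

variable {M : Matrix (Fin n) (Fin n) (ZMod 2)} {S : Finset (Fin n)}
  (hS : ∀ j ∈ S, M j = (1 : Matrix (Fin n) (Fin n) (ZMod 2)) j)
include hS

theorem exists_isColAdd_pivot {i c : Fin n} (hc : c ∉ S) (hci : c ≠ i) (hic : M i c = 1)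
    (hii : M i i = 0) :
    ∃ E, IsColAdd n E ∧ (∀ j ∈ S, (M * E) j = (1 : Matrix (Fin n) (Fin n) (ZMod 2)) j) ∧
      (M * E) i i = 1 := by
  refine ⟨fanoutMatrix n c {i}, ⟨i, c, hci.symm, fanoutMatrix_singleton c i⟩, ?_, ?_⟩
  · intro j hj
    ext b
    have hjc : M j c = 0 := by rw [hS j hj, one_apply_ne (ne_of_mem_of_not_mem hj hc)]
    rw [mul_fanoutMatrix_apply, hjc, ← hS j hj]
    simp
  · simp [mul_fanoutMatrix_apply, hii, hic]

theorem exists_isFanout_clear_row {i : Fin n} (hi : i ∉ S) (hii : M i i = 1) :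
    ∃ E, IsFanout n E ∧
      ∀ j ∈ insert i S, (M * E) j = (1 : Matrix (Fin n) (Fin n) (ZMod 2)) j := by
  let T := Finset.univ.filter fun b => b ≠ i ∧ M i b = 1
  refine ⟨fanoutMatrix n i T, ⟨i, T, by simp [T], rfl⟩, fun j hj => ?_⟩
  ext b
  rw [mul_fanoutMatrix_apply]
  rcases Finset.mem_insert.1 hj with rfl | hjS
  · by_cases hbj : b = j
    · subst hbj
      simp [T, hii]
    · rw [one_apply_ne (Ne.symm hbj), hii]
      have hadd : ∀ x : ZMod 2, x + (if x = 1 then 1 else 0) = 0 := by decide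
      simpa [T, hbj] using hadd (M j b)
  · have hji : M j i = 0 := by rw [hS j hjS, one_apply_ne (ne_of_mem_of_not_mem hjS hi)]
    simp [hji, hS j hjS]

/-- The bound `min 2 Sᶜ.card` records that the last row needs a single fan-out. -/
theorem exists_ops_reduce_row (hM : IsUnit M.det) {i : Fin n} (hi : i ∉ S) :
    ∃ L : List (Matrix (Fin n) (Fin n) (ZMod 2)),
      L.length ≤ min 2 Sᶜ.card ∧ (∀ E ∈ L, IsColAdd n E ∨ IsFanout n E) ∧
      ∀ j ∈ insert i S, (M * L.prod) j = (1 : Matrix (Fin n) (Fin n) (ZMod 2)) j := by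
  have hiS : i ∈ Sᶜ := Finset.mem_compl.2 hi
  obtain ⟨c, hcS, hic⟩ := exists_ne_zero_of_isUnit_det hM hS hi
  replace hic : M i c = 1 := Fin.eq_one_of_ne_zero _ hic
  by_cases hii : M i i = 0
  · have hci : c ≠ i := by rintro rfl; exact one_ne_zero (hic.symm.trans hii)
    obtain ⟨E₁, hE₁, hS₁, hii₁⟩ := exists_isColAdd_pivot hS hcS hci hic hii
    obtain ⟨E₂, hE₂, hrows⟩ := exists_isFanout_clear_row hS₁ hi hii₁
    have hcard : 1 < Sᶜ.card :=
      Finset.one_lt_card.2 ⟨i, hiS, c, Finset.mem_compl.2 hcS, hci.symm⟩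
    refine ⟨[E₁, E₂], by simp only [List.length_cons, List.length_nil]; omega, ?_, ?_⟩
    · simp [hE₁, hE₂]
    · simpa [mul_assoc] using hrows
  · obtain ⟨E, hE, hrows⟩ :=
      exists_isFanout_clear_row hS hi (Fin.eq_one_of_ne_zero _ hii)
    refine ⟨[E], ?_, by simp [hE], by simpa using hrows⟩
    simpa using Finset.card_pos.2 ⟨i, hiS⟩

end RowReduction

theorem exists_ops_of_rows_eq_one (k : ℕ) {M : Matrix (Fin n) (Fin n) (ZMod 2)}
    (hM : IsUnit M.det) {S : Finset (Fin n)}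
    (hS : ∀ j ∈ S, M j = (1 : Matrix (Fin n) (Fin n) (ZMod 2)) j) (hk : Sᶜ.card = k) :
    ∃ L : List (Matrix (Fin n) (Fin n) (ZMod 2)),
      L.length ≤ 2 * k - 1 ∧ (∀ E ∈ L, IsColAdd n E ∨ IsFanout n E) ∧
      M * L.prod = 1 := by
  induction k generalizing M S with
  | zero =>
    have hSc : Sᶜ = ∅ := Finset.card_eq_zero.1 hk
    refine ⟨[], by simp, by simp, ?_⟩
    rw [List.prod_nil, Matrix.mul_one]
    funext j
    exact hS j (by simpa [hSc] using Finset.mem_compl (s := S) (a := j))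
  | succ k ih =>
    obtain ⟨i, hiS⟩ := Finset.card_pos.1 (by omega : 0 < Sᶜ.card)
    have hi : i ∉ S := Finset.mem_compl.1 hiS
    obtain ⟨L₁, hlen₁, hops₁, hrows₁⟩ := exists_ops_reduce_row hS hM hi
    have hM₁ : IsUnit (M * L₁.prod).det := by
      rw [det_mul]
      exact hM.mul <| (isUnit_iff_isUnit_det _).1 (isUnit_prod_of_isColAdd_or_isFanout hops₁)
    have hk₁ : (insert i S)ᶜ.card = k := by
      rw [Finset.compl_insert, Finset.card_erase_of_mem hiS, hk, Nat.add_sub_cancel]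
    obtain ⟨L₂, hlen₂, hops₂, hprod₂⟩ := ih hM₁ hrows₁ hk₁
    refine ⟨L₁ ++ L₂, ?_, ?_, by rw [List.prod_append, ← mul_assoc, hprod₂]⟩
    · rw [List.length_append]
      omega
    · simpa only [List.mem_append] using fun E hE => hE.elim (hops₁ E) (hops₂ E)
end ColumnOperations

/-- any invertible matrix over GF(2) can be reduced to the identity using at
most `2n - 1` operations, each a single column addition or a fan-out. -/
theorem invertible_diagonalized_in_two_n_sub_one (n : ℕ)
    (M : Matrix (Fin n) (Fin n) (ZMod 2)) (hM : IsUnit M.det) :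
    ∃ L : List (Matrix (Fin n) (Fin n) (ZMod 2)),
      L.length ≤ 2 * n - 1 ∧
      (∀ E ∈ L, IsColAdd n E ∨ IsFanout n E) ∧
      M * L.prod = 1 :=
  exists_ops_of_rows_eq_one n hM (S := ∅) (by simp) (by simp)
end

section
/- Lempel factorization consequence: every symmetric n×n matrix A over GF(2) of rank r can be written as A = F F^T where F is n×r' with r' = r if some diagonal entry of A is nonzero or A's rank condition permits, and r' = r + 1 otherwise; in particular r' ≤ r + 1 always suffices. -/
/-!
Induct on the rank with a stronger claim: for every vector `v`, `A + v vᵀ` is a sum of at most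
`rank A + 1` squares `x xᵀ` (the squares of the columns of `F` in `F Fᵀ`). If the quadratic form
`x ↦ xᵀ A x` takes the value `1` at some `x`, the Wedderburn step `A ↦ A - (A x)(A x)ᵀ` lowers
the rank by one and splits off one square. Otherwise `A` is alternating, and if `A ≠ 0` a
hyperbolic pair `y, z` (`yᵀ A z = 1`) gives, with `u = A y`, `w = A z`, the matrix
`A - w uᵀ - u wᵀ` of rank `rank A - 2`. In characteristic two `w uᵀ + u wᵀ + v vᵀ` is the sum of
the three squares of `u + v + w`, `u + v`, `w + v`; the first is absorbed by the induction
hypothesis, which is why the extra square is carried along.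
-/

open Matrix

theorem ZMod.eq_zero_or_eq_one (a : ZMod 2) : a = 0 ∨ a = 1 := by
  decide +revert

namespace Matrix

section GramFactor

variable {m R : Type*} [CommSemiring R]

def HasGramFactor (k : ℕ) (A : Matrix m m R) : Prop :=
  ∃ (r : ℕ) (F : Matrix m (Fin r) R), r ≤ k ∧ A = F * Fᵀ

theorem hasGramFactor_zero : (0 : Matrix m m R).HasGramFactor 0 :=
  ⟨0, 0, le_rfl, by simp⟩

theorem HasGramFactor.mono {k l : ℕ} {A : Matrix m m R} (h : A.HasGramFactor k) (hkl : k ≤ l) :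
    A.HasGramFactor l :=
  let ⟨r, F, hr, hF⟩ := h
  ⟨r, F, hr.trans hkl, hF⟩

theorem HasGramFactor.add_vecMulVec {k : ℕ} {A : Matrix m m R} (h : A.HasGramFactor k)
    (v : m → R) : (A + vecMulVec v v).HasGramFactor (k + 1) := by
  obtain ⟨r, F, hr, rfl⟩ := h
  refine ⟨r + 1, of fun i => Fin.cons (v i) (F i), by omega, ?_⟩
  ext i j
  simp [mul_apply, Fin.sum_univ_succ, vecMulVec_apply, add_comm]

end GramFactor

section Rank

variable {l m n K : Type*} [Fintype n] [Field K]

theorem rank_lt_rank_of_ker_lt {A : Matrix l n K} {B : Matrix m n K}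
    (h : LinearMap.ker A.mulVecLin < LinearMap.ker B.mulVecLin) : B.rank < A.rank := by
  have hA := LinearMap.finrank_range_add_finrank_ker A.mulVecLin
  have hB := LinearMap.finrank_range_add_finrank_ker B.mulVecLin
  have := Submodule.finrank_lt_finrank_of_lt h
  unfold rank
  omega

theorem rank_sub_vecMulVec_lt [Fintype m] {A : Matrix m n K} {x : n → K} {y : m → K}
    (h : y ⬝ᵥ A *ᵥ x = 1) : (A - vecMulVec (A *ᵥ x) (y ᵥ* A)).rank < A.rank := by
  have hmulVec (p : n → K) :
      (A - vecMulVec (A *ᵥ x) (y ᵥ* A)) *ᵥ p = A *ᵥ p - (y ⬝ᵥ A *ᵥ p) • A *ᵥ x := by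
    rw [sub_mulVec, vecMulVec_mulVec, op_smul_eq_smul, ← dotProduct_mulVec]
  refine rank_lt_rank_of_ker_lt (SetLike.lt_iff_le_and_exists.2 ⟨fun p hp => ?_, x, ?_, ?_⟩)
  · rw [LinearMap.mem_ker, mulVecLin_apply] at hp ⊢
    rw [hmulVec, hp, dotProduct_zero, zero_smul, sub_zero]
  · rw [LinearMap.mem_ker, mulVecLin_apply, hmulVec, h, one_smul, sub_self]
  · rw [LinearMap.mem_ker, mulVecLin_apply]
    intro hx
    rw [hx, dotProduct_zero] at h
    exact zero_ne_one h

theorem IsSymm.vecMul_eq_mulVec {A : Matrix n n K} (hA : A.IsSymm) (y : n → K) :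
    y ᵥ* A = A *ᵥ y := by
  conv_lhs => rw [← hA.eq]
  exact vecMul_transpose A y

theorem IsSymm.dotProduct_mulVec_comm {A : Matrix n n K} (hA : A.IsSymm) (y z : n → K) :
    y ⬝ᵥ A *ᵥ z = z ⬝ᵥ A *ᵥ y := by
  rw [dotProduct_mulVec, hA.vecMul_eq_mulVec, dotProduct_comm]

theorem IsSymm.rank_sub_vecMulVec_sub_vecMulVec_add_two_le {A : Matrix n n K} (hA : A.IsSymm)
    {y z : n → K} (hy : y ⬝ᵥ A *ᵥ y = 0) (hz : z ⬝ᵥ A *ᵥ z = 0) (hyz : y ⬝ᵥ A *ᵥ z = 1) :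
    (A - vecMulVec (A *ᵥ z) (A *ᵥ y) - vecMulVec (A *ᵥ y) (A *ᵥ z)).rank + 2 ≤ A.rank := by
  set A₁ := A - vecMulVec (A *ᵥ z) (A *ᵥ y)
  have h₁ : A₁.rank < A.rank := by
    simpa only [hA.vecMul_eq_mulVec] using rank_sub_vecMulVec_lt hyz
  have hA₁y : A₁ *ᵥ y = A *ᵥ y := by
    rw [sub_mulVec, vecMulVec_mulVec, dotProduct_comm, hy, op_smul_eq_smul, zero_smul, sub_zero]
  have hzA₁ : z ᵥ* A₁ = A *ᵥ z := by
    rw [vecMul_sub, vecMul_vecMulVec, hz, zero_smul, sub_zero, hA.vecMul_eq_mulVec]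
  have h₂ : (A₁ - vecMulVec (A₁ *ᵥ y) (z ᵥ* A₁)).rank < A₁.rank :=
    rank_sub_vecMulVec_lt (by rw [hA₁y, ← hA.dotProduct_mulVec_comm, hyz])
  rw [hA₁y, hzA₁] at h₂
  omega

end Rank

theorem isSymm_vecMulVec_self_s17 {n α : Type*} [CommMagma α] (v : n → α) :
    (vecMulVec v v).IsSymm :=
  transpose_vecMulVec v v

theorem vecMulVec_add_vecMulVec_add_vecMulVec_self {m R : Type*} [CommRing R] [CharP R 2]
    (u v w : m → R) :
    vecMulVec w u + vecMulVec u w + vecMulVec v v =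
      vecMulVec (u + v + w) (u + v + w) + vecMulVec (u + v) (u + v) +
        vecMulVec (w + v) (w + v) := by
  ext i j
  simp only [add_apply, vecMulVec_apply, Pi.add_apply]
  linear_combination (-(u i * u j + u i * v j + v i * u j + v i * v j + v i * w j + w i * v j +
    w i * w j)) * CharTwo.two_eq_zero (R := R)

section ZModTwo

variable {m : Type*} [Fintype m] [DecidableEq m]

theorem exists_dotProduct_mulVec_eq_one {A : Matrix m m (ZMod 2)} (hA : A ≠ 0) :
    ∃ y z : m → ZMod 2, y ⬝ᵥ A *ᵥ z = 1 := by
  obtain ⟨i, j, hij⟩ : ∃ i j, A i j ≠ 0 := by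
    contrapose! hA
    exact ext hA
  refine ⟨Pi.single i 1, Pi.single j 1, ?_⟩
  rw [mulVec_single_one, single_one_dotProduct]
  exact (ZMod.eq_zero_or_eq_one _).resolve_left hij

theorem IsSymm.hasGramFactor_add_vecMulVec {A : Matrix m m (ZMod 2)} (hA : A.IsSymm)
    (v : m → ZMod 2) : (A + vecMulVec v v).HasGramFactor (A.rank + 1) := by
  induction hr : A.rank using Nat.strong_induction_on generalizing A v with
  | _ r ih =>
  by_cases hdiag : ∃ x, x ⬝ᵥ A *ᵥ x = 1
  · obtain ⟨x, hx⟩ := hdiag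
    set a := A *ᵥ x
    have hlt : (A - vecMulVec a a).rank < r := by
      simpa only [hr, hA.vecMul_eq_mulVec] using rank_sub_vecMulVec_lt hx
    rw [show A + vecMulVec v v = A - vecMulVec a a + vecMulVec v v + vecMulVec a a by abel]
    exact ((ih _ hlt (hA.sub (isSymm_vecMulVec_self_s17 a)) v rfl).add_vecMulVec a).mono (by omega)
  have halt (x : m → ZMod 2) : x ⬝ᵥ A *ᵥ x = 0 :=
    (ZMod.eq_zero_or_eq_one _).resolve_right (not_exists.1 hdiag x)
  by_cases h0 : A = 0
  · subst h0
    rw [← hr, rank_zero]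
    exact hasGramFactor_zero.add_vecMulVec v
  obtain ⟨y, z, hyz⟩ := exists_dotProduct_mulVec_eq_one h0
  set u := A *ᵥ y
  set w := A *ᵥ z
  set A'' := A - vecMulVec w u - vecMulVec u w
  have hlt : A''.rank + 2 ≤ r :=
    hr ▸ hA.rank_sub_vecMulVec_sub_vecMulVec_add_two_le (halt y) (halt z) hyz
  have hA'' : A''.IsSymm := by
    simp only [A'', IsSymm, transpose_sub, transpose_vecMulVec, hA.eq]
    abel
  have hdecomp : A + vecMulVec v v = A'' + vecMulVec (u + v + w) (u + v + w) +
      vecMulVec (u + v) (u + v) + vecMulVec (w + v) (w + v) := by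
    calc A + vecMulVec v v = A'' + (vecMulVec w u + vecMulVec u w + vecMulVec v v) := by
          simp only [A'']; abel
      _ = _ := by rw [vecMulVec_add_vecMulVec_add_vecMulVec_self]; abel
  rw [hdecomp]
  exact (((ih _ (by omega) hA'' (u + v + w) rfl).add_vecMulVec (u + v)).add_vecMulVec
    (w + v)).mono (by omega)

end ZModTwo

end Matrix

/-- Lempel factorization: every symmetric matrix `A` over GF(2) can be
written as `A = F Fᵀ` with `F` having `r' ≤ rank(A) + 1` columns. -/
theorem lempel_factorization (n : ℕ) (A : Matrix (Fin n) (Fin n) (ZMod 2))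
    (hA : A.IsSymm) :
    ∃ (r' : ℕ) (F : Matrix (Fin n) (Fin r') (ZMod 2)),
      r' ≤ A.rank + 1 ∧ A = F * F.transpose := by
  have h := hA.hasGramFactor_add_vecMulVec 0
  rwa [zero_vecMulVec, add_zero] at h
end
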